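/- arXiv:1202.2340 — 2 statements merged into one kernel-verified Lean document; each statement's English description precedes it below -/
import Mathlib

section
/- If u₁, u₂, u₃ are involutions of ℙ¹(ℂ) each of which swaps two fixed distinct points y and z (so each uᵢ maps y to z and z to y), then the product u₃u₂u₁ is an involution. -/
open Projectivization

noncomputable section

/-- The complex projective line `ℙ¹(ℂ)`. -/
abbrev ProjLine : Type := Projectivization ℂ (Fin 2 → ℂ)

/-- The permutation of `ℙ¹(ℂ)` induced by a linear automorphism of `ℂ²`. -/
def projPerm (e : (Fin 2 → ℂ) ≃ₗ[ℂ] (Fin 2 → ℂ)) : Equiv.Perm ProjLine where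
  toFun := Projectivization.map e.toLinearMap e.injective
  invFun := Projectivization.map e.symm.toLinearMap e.symm.injective
  left_inv := fun p => by
    induction p using Projectivization.ind with
    | h v hv => simp [Projectivization.map_mk]
  right_inv := fun p => by
    induction p using Projectivization.ind with
    | h v hv => simp [Projectivization.map_mk]

/-- The action of `GL(2,ℂ)` on `ℙ¹(ℂ)` by Möbius (projective) transformations,
as a group homomorphism to the permutation group of `ℙ¹(ℂ)`. -/
def mobius : GL (Fin 2) ℂ →* Equiv.Perm ProjLine where
  toFun g := projPerm ((LinearMap.GeneralLinearGroup.generalLinearEquiv ℂ (Fin 2 → ℂ))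
      (Matrix.GeneralLinearGroup.toLin g))
  map_one' := by
    ext p
    induction p using Projectivization.ind with
    | h v hv => simp [projPerm, Projectivization.map_mk]
  map_mul' g h := by
    ext p
    induction p using Projectivization.ind with
    | h v hv =>
      simp [projPerm, Projectivization.map_mk]

/-- `PGL(2,ℂ)`, realized faithfully as the group of Möbius transformations of `ℙ¹(ℂ)`. -/
def PGL2 : Subgroup (Equiv.Perm ProjLine) := mobius.range

end

/-!
A Möbius transformation `g` swapping two distinct points `y = [v]` and `z = [w]` satisfies
`g v = a w` and `g w = b v`, so in the basis `(v, w)` of `ℂ²` its square is the scalar `a b`,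
i.e. `g² = 1` in `PGL(2,ℂ)`. The product `u₃u₂u₁` again swaps `y` and `z`, hence is such an
involution (and is nontrivial because it moves `y`).
-/

section Swap

variable {K V : Type*} [Field K] [AddCommGroup V] [Module K V]

theorem LinearMap.comp_self_eq_smul_id_of_swap (hV : Module.finrank K V = 2) {f : V →ₗ[K] V}
    {v w : V} (hvw : LinearIndependent K ![v, w]) {a b : K} (hv : f v = a • w)
    (hw : f w = b • v) : f ∘ₗ f = (a * b) • LinearMap.id := by
  let basis := basisOfLinearIndependentOfCardEqFinrank hvw (by simp [hV])
  refine basis.ext fun i => ?_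
  fin_cases i <;> simp [basis, hv, hw, smul_smul, mul_comm]

theorem Projectivization.map_involutive_of_swap (hV : Module.finrank K V = 2) {f : V →ₗ[K] V}
    (hf : Function.Injective f) {p q : Projectivization K V} (hpq : p ≠ q) (hp : map f hf p = q)
    (hq : map f hf q = p) : Function.Involutive (map f hf) := by
  induction p using ind with | h v hv =>
  induction q using ind with | h w hw =>
  rw [map_mk, mk_eq_mk_iff] at hp hq
  obtain ⟨a, ha⟩ := hp
  obtain ⟨b, hb⟩ := hq
  have hvw : LinearIndependent K ![v, w] :=
    (independent_mk_iff_LinearIndependent hv hw).1 ((independent_pair_iff_ne _ _).2 hpq)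
  have hsq := LinearMap.comp_self_eq_smul_id_of_swap hV hvw ha.symm hb.symm
  intro x
  induction x using ind with | h u hu =>
  rw [map_mk, map_mk, mk_eq_mk_iff]
  exact ⟨a * b, by simpa [Units.smul_def] using (LinearMap.congr_fun hsq u).symm⟩

end Swap

theorem PGL2.sq_eq_one_of_swap {g : PGL2} {y z : ProjLine} (hyz : y ≠ z)
    (hy : (g : Equiv.Perm ProjLine) y = z) (hz : (g : Equiv.Perm ProjLine) z = y) :
    g ^ 2 = 1 := by
  obtain ⟨M, hM⟩ := g.2
  let e := LinearMap.GeneralLinearGroup.generalLinearEquiv ℂ (Fin 2 → ℂ)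
    (Matrix.GeneralLinearGroup.toLin M)
  have hg : ⇑(g : Equiv.Perm ProjLine) = map e.toLinearMap e.injective := by rw [← hM]; rfl
  rw [hg] at hy hz
  have hinv := map_involutive_of_swap (by simp) e.injective hyz hy hz
  ext x
  simpa [sq, hg] using hinv x

theorem pgl2_three_swapping_involutions_general (u₁ u₂ u₃ : PGL2) (y z : ProjLine) (hyz : y ≠ z)
    (h1y : (↑u₁ : Equiv.Perm ProjLine) y = z) (h1z : (↑u₁ : Equiv.Perm ProjLine) z = y)
    (h2y : (↑u₂ : Equiv.Perm ProjLine) y = z) (h2z : (↑u₂ : Equiv.Perm ProjLine) z = y)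
    (h3y : (↑u₃ : Equiv.Perm ProjLine) y = z) (h3z : (↑u₃ : Equiv.Perm ProjLine) z = y) :
    u₃ * u₂ * u₁ ≠ 1 ∧ (u₃ * u₂ * u₁) ^ 2 = 1 := by
  have hy : (↑(u₃ * u₂ * u₁) : Equiv.Perm ProjLine) y = z := by simp [h1y, h2z, h3y]
  have hz : (↑(u₃ * u₂ * u₁) : Equiv.Perm ProjLine) z = y := by simp [h1z, h2y, h3z]
  refine ⟨fun h => hyz ?_, PGL2.sq_eq_one_of_swap hyz hy hz⟩
  simpa [h] using hy

/-- If `u₁, u₂, u₃` are involutions of `ℙ¹(ℂ)` each swapping two fixed distinct points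
`y` and `z`, then the product `u₃u₂u₁` is an involution. -/
theorem pgl2_three_swapping_involutions (u₁ u₂ u₃ : PGL2) (y z : ProjLine) (hyz : y ≠ z)
    (h1 : u₁ ≠ 1) (h1sq : u₁ ^ 2 = 1) (h2 : u₂ ≠ 1) (h2sq : u₂ ^ 2 = 1)
    (h3 : u₃ ≠ 1) (h3sq : u₃ ^ 2 = 1)
    (h1y : (↑u₁ : Equiv.Perm ProjLine) y = z) (h1z : (↑u₁ : Equiv.Perm ProjLine) z = y)
    (h2y : (↑u₂ : Equiv.Perm ProjLine) y = z) (h2z : (↑u₂ : Equiv.Perm ProjLine) z = y)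
    (h3y : (↑u₃ : Equiv.Perm ProjLine) y = z) (h3z : (↑u₃ : Equiv.Perm ProjLine) z = y) :
    u₃ * u₂ * u₁ ≠ 1 ∧ (u₃ * u₂ * u₁) ^ 2 = 1 :=
  pgl2_three_swapping_involutions_general u₁ u₂ u₃ y z hyz h1y h1z h2y h2z h3y h3z
end

section
/- With P_n defined by P₀ = 1, P₁ = x, P_n = xP_{n−1} − P_{n−2}, and M_u = [[0,1],[1,0]], M_v = [[1,0],[x,−1]] over ℂ, for a fixed x ∈ ℂ the matrix (M_u M_v)^n is a scalar multiple of the identity matrix if and only if P_{n−1}(x) = 0. -/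
/-! `M_u M_v = [[x, -1], [1, 0]]` is the companion matrix of the recurrence, so its `n`-th power
has off-diagonal entries `∓P_{n-1}` and diagonal entries `P_n`, `-P_{n-2}`; once `P_{n-1} = 0`
the recurrence `P_n = x P_{n-1} - P_{n-2}` makes the diagonal entries equal. -/

/-- The Fibonacci-like sequence `P₀ = 1`, `P₁ = x`, `Pₙ = x·Pₙ₋₁ − Pₙ₋₂` evaluated
at `x : ℂ`. -/
def Pfib (x : ℂ) : ℕ → ℂ
  | 0 => 1
  | 1 => x
  | (n + 2) => x * Pfib x (n + 1) - Pfib x n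

/-- `PfibShift x n = P_{n-1}(x)`, with the convention `P_{−1} = 0`. -/
def PfibShift (x : ℂ) : ℕ → ℂ
  | 0 => 0
  | (n + 1) => Pfib x n

lemma Pfib_succ (x : ℂ) (n : ℕ) : Pfib x (n + 1) = x * Pfib x n - PfibShift x n := by
  cases n <;> simp [Pfib, PfibShift]

lemma Matrix.exists_eq_smul_one_iff_fin_two {R : Type*} [MulZeroOneClass R]
    (A : Matrix (Fin 2) (Fin 2) R) :
    (∃ c : R, A = c • (1 : Matrix (Fin 2) (Fin 2) R)) ↔
      A 0 1 = 0 ∧ A 1 0 = 0 ∧ A 0 0 = A 1 1 := by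
  constructor
  · rintro ⟨c, rfl⟩
    simp
  · rintro ⟨h01, h10, hdiag⟩
    refine ⟨A 0 0, ?_⟩
    ext i j
    fin_cases i <;> fin_cases j <;> simp [h01, h10, hdiag]

/- The lower-right entry is `-P_{n-2}`, written as `P_n - x P_{n-1}` so that the formula also
holds for `n = 0`. -/
lemma mul_pow_eq_Pfib (x : ℂ) (n : ℕ) :
    ((!![0, 1; 1, 0] : Matrix (Fin 2) (Fin 2) ℂ) *
        (!![1, 0; x, -1] : Matrix (Fin 2) (Fin 2) ℂ)) ^ n =
      !![Pfib x n, -PfibShift x n; PfibShift x n, Pfib x n - x * PfibShift x n] := by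
  have hprod : (!![0, 1; 1, 0] : Matrix (Fin 2) (Fin 2) ℂ) * !![1, 0; x, -1] =
      !![x, -1; 1, 0] := by
    simp
  rw [hprod]
  induction n with
  | zero => simp [Pfib, PfibShift, Matrix.one_fin_two]
  | succ n ih =>
    rw [pow_succ, ih, Matrix.mul_fin_two, Pfib_succ x n, show PfibShift x (n + 1) = Pfib x n from rfl]
    ext i j
    fin_cases i <;> fin_cases j <;> simp <;> ring

theorem mul_pow_scalar_iff_general (x : ℂ) (n : ℕ) :
    (∃ c : ℂ, ((!![0, 1; 1, 0] : Matrix (Fin 2) (Fin 2) ℂ) *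
        (!![1, 0; x, -1] : Matrix (Fin 2) (Fin 2) ℂ)) ^ n =
        c • (1 : Matrix (Fin 2) (Fin 2) ℂ)) ↔ PfibShift x n = 0 := by
  rw [mul_pow_eq_Pfib, Matrix.exists_eq_smul_one_iff_fin_two]
  simp +contextual

/-- For a fixed `x ∈ ℂ`, with `M_u = [[0,1],[1,0]]` and `M_v = [[1,0],[x,−1]]`, the
matrix `(M_u M_v)^n` is a scalar multiple of the identity iff `P_{n−1}(x) = 0`. -/
theorem mul_pow_scalar_iff (x : ℂ) (n : ℕ) (hn : 1 ≤ n) :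
    (∃ c : ℂ, ((!![0, 1; 1, 0] : Matrix (Fin 2) (Fin 2) ℂ) *
        (!![1, 0; x, -1] : Matrix (Fin 2) (Fin 2) ℂ)) ^ n =
        c • (1 : Matrix (Fin 2) (Fin 2) ℂ)) ↔ PfibShift x n = 0 :=
  mul_pow_scalar_iff_general x n
end
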